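/- Let Q be a quadri-algebra over a field F of characteristic zero and let X ⊆ Q. Then the quadri-subalgebra of Q generated by X (the smallest F-subspace of Q containing X and closed under ↘, ↗, ↖ and ↙) is spanned, as an F-vector space, by the evaluations in Q of normal tree monomials on X: planar binary trees whose leaves are labeled by elements of X, whose internal nodes are labeled by {↘, ↗, ↖, ↙}, and whose left-growth patterns (p, q) all satisfy p ≠ ↖, q ≠ ↘, and p ≠ q (so the allowed left-growth patterns are exactly (↙,↖), (↙,↗), (↗,↙), (↗,↖), (↘,↙), (↘,↖), (↘,↗)). -/

import Mathlib

/-- Operation labels `↘` (se), `↗` (ne), `↖` (nw), `↙` (sw). -/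
inductive QuadOp where
  | se
  | ne
  | nw
  | sw
deriving DecidableEq

/-- Planar (full) binary trees with internal nodes labeled by `QuadOp` and leaves
labeled by elements of `Q`. -/
inductive QTree (Q : Type*) where
  | leaf : Q → QTree Q
  | node : QuadOp → QTree Q → QTree Q → QTree Q

/-- Evaluation of a labeled tree in `Q` using the four operations. -/
def QTree.eval {Q : Type*} (fse fne fnw fsw : Q → Q → Q) : QTree Q → Q
  | .leaf x => x
  | .node QuadOp.se l r => fse (l.eval fse fne fnw fsw) (r.eval fse fne fnw fsw)
  | .node QuadOp.ne l r => fne (l.eval fse fne fnw fsw) (r.eval fse fne fnw fsw)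
  | .node QuadOp.nw l r => fnw (l.eval fse fne fnw fsw) (r.eval fse fne fnw fsw)
  | .node QuadOp.sw l r => fsw (l.eval fse fne fnw fsw) (r.eval fse fne fnw fsw)

/-- All leaf labels of the tree lie in `X`. -/
def QTree.leavesIn {Q : Type*} (X : Set Q) : QTree Q → Prop
  | .leaf x => x ∈ X
  | .node _ l r => l.leavesIn X ∧ r.leavesIn X

/-- Normality: every left-growth pattern `(p, q)` satisfies `p ≠ ↖`, `q ≠ ↘`, `p ≠ q`. -/
def QTree.normal {Q : Type*} : QTree Q → Prop
  | .leaf _ => True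
  | .node _ (.leaf _) r => r.normal
  | .node p (.node q a b) r =>
      p ≠ QuadOp.nw ∧ q ≠ QuadOp.se ∧ p ≠ q ∧
        (QTree.node q a b).normal ∧ r.normal

/-!
Each axiom, read from left to right, rewrites a forbidden left-growth pattern `p (q x y) z` as a
combination of terms `q x (r y z)` minus correction terms `p (c x y) z` in which `c` precedes `q`
in the order `↖ < ↗, ↙ < ↘`. Weighting the nodes of the left spine by `↖ ↦ 1`, `↗, ↙ ↦ 2`,
`↘ ↦ 3`, the first kind of term loses the node `p` and the second lowers `q`, so the spine weight
drops while the number of leaves is unchanged. Induction on (number of leaves, spine weight)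
reduces every monomial to ones whose spine has only allowed patterns; their right subtrees are
smaller, hence combinations of normal monomials, and grafting those onto an allowed spine gives
normal monomials.
-/

open Submodule

theorem Submodule.apply_mem_span_image2 {R M N P : Type*} [CommSemiring R] [AddCommMonoid M]
    [AddCommMonoid N] [AddCommMonoid P] [Module R M] [Module R N] [Module R P]
    (f : M →ₗ[R] N →ₗ[R] P) {s : Set M} {t : Set N} {m : M} {n : N}
    (hm : m ∈ span R s) (hn : n ∈ span R t) :
    f m n ∈ span R (Set.image2 (fun a b => f a b) s t) :=
  map₂_span_span R f s t ▸ apply_mem_map₂ f hm hn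

namespace QuadOp

def weight : QuadOp → ℕ
  | nw => 1
  | ne => 2
  | sw => 2
  | se => 3

theorem weight_pos (o : QuadOp) : 0 < o.weight := by
  cases o <;> decide

def Admissible (p q : QuadOp) : Prop := p ≠ nw ∧ q ≠ se ∧ p ≠ q

def interp {M : Type*} (se ne nw sw : M) : QuadOp → M
  | .se => se
  | .ne => ne
  | .nw => nw
  | .sw => sw

end QuadOp

namespace QTree

variable {Q : Type*}

def size : QTree Q → ℕ
  | leaf _ => 1
  | node _ l r => l.size + r.size

def root? : QTree Q → Option QuadOp
  | leaf _ => none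
  | node o _ _ => some o

def spineWeight : QTree Q → ℕ
  | leaf _ => 0
  | node o l _ => o.weight + l.spineWeight

def SpineAdmissible : QTree Q → Prop
  | leaf _ => True
  | node p l _ => (∀ q ∈ l.root?, p.Admissible q) ∧ l.SpineAdmissible

theorem size_pos (t : QTree Q) : 0 < t.size := by
  induction t with
  | leaf => exact Nat.one_pos
  | node _ l r ihl _ => exact Nat.add_pos_left ihl _

theorem normal_node_iff {p : QuadOp} {l r : QTree Q} :
    (node p l r).normal ↔ (∀ q ∈ l.root?, p.Admissible q) ∧ l.normal ∧ r.normal := by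
  cases l <;> simp [normal, root?, QuadOp.Admissible, and_assoc]

end QTree

open QTree

section QuadriAlgebra

variable {R : Type*} [CommRing R] {Q : Type*} [AddCommGroup Q] [Module R Q]

section Trees

variable (op : QuadOp → Q →ₗ[R] Q →ₗ[R] Q)

def QTree.evalOp : QTree Q → Q
  | leaf x => x
  | node o l r => op o (l.evalOp) (r.evalOp)

theorem QTree.evalOp_interp (se ne nw sw : Q →ₗ[R] Q →ₗ[R] Q) (t : QTree Q) :
    t.evalOp (QuadOp.interp se ne nw sw) =
      t.eval (fun u v => se u v) (fun u v => ne u v) (fun u v => nw u v) (fun u v => sw u v) := by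
  induction t with
  | leaf => rfl
  | node o l r ihl ihr => cases o <;> simp [evalOp, eval, QuadOp.interp, ihl, ihr]

def normalSpan (X : Set Q) : Submodule R Q :=
  span R {a | ∃ t : QTree Q, t.leavesIn X ∧ t.normal ∧ t.evalOp op = a}

variable {op} {X : Set Q}

theorem subset_normalSpan : X ⊆ normalSpan op X :=
  fun x hx => subset_span ⟨leaf x, hx, trivial, rfl⟩

theorem QTree.evalOp_mem {p : Submodule R Q} (hX : X ⊆ p)
    (hp : ∀ o, ∀ a ∈ p, ∀ b ∈ p, op o a b ∈ p) {t : QTree Q} (ht : t.leavesIn X) :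
    t.evalOp op ∈ p := by
  induction t with
  | leaf x => exact hX ht
  | node o l r ihl ihr => exact hp o _ (ihl ht.1) _ (ihr ht.2)

theorem normalSpan_le {p : Submodule R Q} (hX : X ⊆ p)
    (hp : ∀ o, ∀ a ∈ p, ∀ b ∈ p, op o a b ∈ p) : normalSpan op X ≤ p :=
  span_le.2 fun _ ⟨_, ht, _, hval⟩ => hval ▸ evalOp_mem hX hp ht

theorem QTree.evalOp_mem_span_normal_of_spineAdmissible {t : QTree Q} (hX : t.leavesIn X)
    (ht : t.SpineAdmissible)
    (hsmall : ∀ s : QTree Q, s.size < t.size → s.leavesIn X → s.evalOp op ∈ normalSpan op X) :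
    t.evalOp op ∈ span R
      {a | ∃ s : QTree Q, s.leavesIn X ∧ s.normal ∧ s.root? = t.root? ∧ s.evalOp op = a} := by
  induction t with
  | leaf x => exact subset_span ⟨leaf x, hX, trivial, rfl, rfl⟩
  | node o l r ihl _ =>
    have hl := ihl hX.1 ht.2 fun s hs => hsmall s (by simp only [size]; omega)
    have hr := hsmall r (by simp only [size]; have := l.size_pos; omega) hX.2
    refine span_le.2 ?_ (apply_mem_span_image2 (op o) hl hr)
    rintro _ ⟨_, ⟨s, hsX, hsn, hroot, rfl⟩, _, ⟨s', hs'X, hs'n, rfl⟩, rfl⟩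
    exact subset_span ⟨node o s s', ⟨hsX, hs'X⟩, normal_node_iff.2 ⟨hroot ▸ ht.1, hsn, hs'n⟩,
      rfl, rfl⟩

end Trees

/-- Each axiom is named after the forbidden left-growth pattern it rewrites. -/
structure IsQuadriAlgebra (op : QuadOp → Q →ₗ[R] Q →ₗ[R] Q) : Prop where
  nw_nw : ∀ x y z : Q, op .nw (op .nw x y) z =
    op .nw x (op .se y z + op .ne y z + op .nw y z + op .sw y z)
  nw_ne : ∀ x y z : Q, op .nw (op .ne x y) z = op .ne x (op .nw y z + op .sw y z)
  ne_ne : ∀ x y z : Q, op .ne (op .ne x y + op .nw x y) z = op .ne x (op .ne y z + op .se y z)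
  nw_sw : ∀ x y z : Q, op .nw (op .sw x y) z = op .sw x (op .ne y z + op .nw y z)
  nw_se : ∀ x y z : Q, op .nw (op .se x y) z = op .se x (op .nw y z)
  ne_se : ∀ x y z : Q, op .ne (op .se x y + op .sw x y) z = op .se x (op .ne y z)
  sw_sw : ∀ x y z : Q, op .sw (op .nw x y + op .sw x y) z = op .sw x (op .se y z + op .sw y z)
  sw_se : ∀ x y z : Q, op .sw (op .ne x y + op .se x y) z = op .se x (op .sw y z)
  se_se : ∀ x y z : Q, op .se (op .se x y + op .ne x y + op .nw x y + op .sw x y) z =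
    op .se x (op .se y z)

namespace IsQuadriAlgebra

variable {op : QuadOp → Q →ₗ[R] Q →ₗ[R] Q} {X : Set Q}

theorem mem_span_of_not_admissible (hQ : IsQuadriAlgebra op) {p q : QuadOp}
    (hpq : ¬ p.Admissible q) (x y z : Q) :
    op p (op q x y) z ∈ span R (Set.range (fun r => op q x (op r y z)) ∪
      {a | ∃ c : QuadOp, c.weight < q.weight ∧ op p (op c x y) z = a}) := by
  set S := span R (Set.range (fun r => op q x (op r y z)) ∪
    {a | ∃ c : QuadOp, c.weight < q.weight ∧ op p (op c x y) z = a})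
  have main : ∀ r, op q x (op r y z) ∈ S := fun r => subset_span (.inl ⟨r, rfl⟩)
  have corr : ∀ c, c.weight < q.weight → op p (op c x y) z ∈ S :=
    fun c hc => subset_span (.inr ⟨c, hc, rfl⟩)
  cases p <;> cases q <;> simp only [QuadOp.Admissible, ne_eq, reduceCtorEq, not_false_eq_true,
    and_self, and_true, not_true_eq_false, and_false] at hpq
  case se.se =>
    have h := hQ.se_se x y z
    simp only [map_add, LinearMap.add_apply] at h
    rw [← S.add_mem_iff_left (corr .ne (by decide)), ← S.add_mem_iff_left (corr .nw (by decide)),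
      ← S.add_mem_iff_left (corr .sw (by decide)), h]
    exact main .se
  case ne.se =>
    have h := hQ.ne_se x y z
    simp only [map_add, LinearMap.add_apply] at h
    rw [← S.add_mem_iff_left (corr .sw (by decide)), h]
    exact main .ne
  case ne.ne =>
    have h := hQ.ne_ne x y z
    simp only [map_add, LinearMap.add_apply] at h
    rw [← S.add_mem_iff_left (corr .nw (by decide)), h]
    exact add_mem (main .ne) (main .se)
  case nw.se =>
    rw [hQ.nw_se]
    exact main .nw
  case nw.ne =>
    rw [hQ.nw_ne, map_add]
    exact add_mem (main .nw) (main .sw)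
  case nw.nw =>
    rw [hQ.nw_nw, map_add, map_add, map_add]
    exact add_mem (add_mem (add_mem (main .se) (main .ne)) (main .nw)) (main .sw)
  case nw.sw =>
    rw [hQ.nw_sw, map_add]
    exact add_mem (main .ne) (main .nw)
  case sw.se =>
    have h := hQ.sw_se x y z
    simp only [map_add, LinearMap.add_apply] at h
    rw [← S.add_mem_iff_right (corr .ne (by decide)), h]
    exact main .sw
  case sw.sw =>
    have h := hQ.sw_sw x y z
    simp only [map_add, LinearMap.add_apply] at h
    rw [← S.add_mem_iff_right (corr .nw (by decide)), h]
    exact add_mem (main .se) (main .sw)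

theorem evalOp_mem_span_of_not_spineAdmissible (hQ : IsQuadriAlgebra op) {t : QTree Q}
    (hX : t.leavesIn X) (ht : ¬ t.SpineAdmissible) :
    t.evalOp op ∈ span R {a | ∃ s : QTree Q, s.leavesIn X ∧ s.size = t.size ∧
      s.spineWeight < t.spineWeight ∧ s.evalOp op = a} := by
  induction t with
  | leaf => exact absurd trivial ht
  | node p l c ihl _ =>
    cases l with
    | leaf => exact (ht ⟨fun _ h => (nomatch h), trivial⟩).elim
    | node q a b =>
      by_cases hpq : p.Admissible q
      · have hl := ihl hX.1 fun hl => ht ⟨fun _ h => Option.mem_some_iff.1 h ▸ hpq, hl⟩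
        refine span_le.2 ?_ (apply_mem_span_image_of_mem_span ((op p).flip (c.evalOp op)) hl)
        rintro _ ⟨_, ⟨s, hsX, hsize, hw, rfl⟩, rfl⟩
        refine subset_span ⟨node p s c, ⟨hsX, hX.2⟩, ?_, ?_, rfl⟩
        · simp only [size] at hsize ⊢; omega
        · simp only [spineWeight] at hw ⊢; omega
      · refine span_le.2 ?_ (hQ.mem_span_of_not_admissible hpq (a.evalOp op) (b.evalOp op)
          (c.evalOp op))
        rintro _ (⟨r, rfl⟩ | ⟨d, hd, rfl⟩)
        · refine subset_span ⟨node q a (node r b c), ⟨hX.1.1, hX.1.2, hX.2⟩, ?_, ?_, rfl⟩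
          · simp only [size]; omega
          · simp only [spineWeight]; have := p.weight_pos; omega
        · refine subset_span ⟨node p (node d a b) c, hX, rfl, ?_, rfl⟩
          simp only [spineWeight]; omega

theorem evalOp_mem_normalSpan (hQ : IsQuadriAlgebra op) (t : QTree Q) (hX : t.leavesIn X) :
    t.evalOp op ∈ normalSpan op X := by
  by_cases ht : t.SpineAdmissible
  · refine span_le.2 ?_ (evalOp_mem_span_normal_of_spineAdmissible hX ht
      fun s (hlt : s.size < t.size) hs => hQ.evalOp_mem_normalSpan s hs)
    rintro _ ⟨s, hsX, hsn, -, rfl⟩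
    exact subset_span ⟨s, hsX, hsn, rfl⟩
  · refine span_le.2 ?_ (hQ.evalOp_mem_span_of_not_spineAdmissible hX ht)
    rintro _ ⟨s, hsX, hsize, (hlt : s.spineWeight < t.spineWeight), rfl⟩
    exact hQ.evalOp_mem_normalSpan s hsX
termination_by (t.size, t.spineWeight)
decreasing_by
  · exact Prod.Lex.left _ _ hlt
  · exact hsize ▸ Prod.Lex.right _ hlt

theorem op_mem_normalSpan (hQ : IsQuadriAlgebra op) (o : QuadOp) {a b : Q}
    (ha : a ∈ normalSpan op X) (hb : b ∈ normalSpan op X) : op o a b ∈ normalSpan op X := by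
  refine span_le.2 ?_ (apply_mem_span_image2 (op o) ha hb)
  rintro _ ⟨_, ⟨s, hsX, -, rfl⟩, _, ⟨s', hs'X, -, rfl⟩, rfl⟩
  exact hQ.evalOp_mem_normalSpan (node o s s') ⟨hsX, hs'X⟩

end IsQuadriAlgebra

end QuadriAlgebra

theorem quadri_subalgebra_spanned_by_normal_monomials_general
    (F : Type*) [Field F]
    (Q : Type*) [AddCommGroup Q] [Module F Q]
    (se ne nw sw : Q →ₗ[F] Q →ₗ[F] Q)
    (q1 : ∀ x y z : Q, nw (nw x y) z = nw x (se y z + ne y z + nw y z + sw y z))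
    (q2 : ∀ x y z : Q, nw (ne x y) z = ne x (nw y z + sw y z))
    (q3 : ∀ x y z : Q, ne (ne x y + nw x y) z = ne x (ne y z + se y z))
    (q4 : ∀ x y z : Q, nw (sw x y) z = sw x (ne y z + nw y z))
    (q5 : ∀ x y z : Q, nw (se x y) z = se x (nw y z))
    (q6 : ∀ x y z : Q, ne (se x y + sw x y) z = se x (ne y z))
    (q7 : ∀ x y z : Q, sw (nw x y + sw x y) z = sw x (se y z + sw y z))
    (q8 : ∀ x y z : Q, sw (ne x y + se x y) z = se x (sw y z))
    (q9 : ∀ x y z : Q, se (se x y + ne x y + nw x y + sw x y) z = se x (se y z))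
    (X : Set Q) :
    sInf {p : Submodule F Q |
        X ⊆ p ∧ ∀ a ∈ p, ∀ b ∈ p,
          se a b ∈ p ∧ ne a b ∈ p ∧ nw a b ∈ p ∧ sw a b ∈ p} =
      Submodule.span F
        {a : Q | ∃ t : QTree Q, t.leavesIn X ∧ t.normal ∧
          t.eval (fun u v => se u v) (fun u v => ne u v)
            (fun u v => nw u v) (fun u v => sw u v) = a} := by
  have hQ : IsQuadriAlgebra (QuadOp.interp se ne nw sw) := ⟨q1, q2, q3, q4, q5, q6, q7, q8, q9⟩
  simp only [← QTree.evalOp_interp]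
  refine le_antisymm (sInf_le ⟨subset_normalSpan, fun a ha b hb => ?_⟩) (le_sInf ?_)
  · exact ⟨hQ.op_mem_normalSpan .se ha hb, hQ.op_mem_normalSpan .ne ha hb,
      hQ.op_mem_normalSpan .nw ha hb, hQ.op_mem_normalSpan .sw ha hb⟩
  · rintro p ⟨hXp, hp⟩
    refine normalSpan_le hXp fun o a ha b hb => ?_
    obtain ⟨hse, hne, hnw, hsw⟩ := hp a ha b hb
    cases o <;> assumption

/-- in a quadri-algebra `Q` (ops `se = ↘`, `ne = ↗`, `nw = ↖`, `sw = ↙`)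
over a field of characteristic zero, the quadri-subalgebra generated by `X ⊆ Q` (the
smallest subspace containing `X` and closed under the four operations) is spanned by
the evaluations of normal tree monomials on `X`. -/
theorem quadri_subalgebra_spanned_by_normal_monomials
    (F : Type*) [Field F] [CharZero F]
    (Q : Type*) [AddCommGroup Q] [Module F Q]
    (se ne nw sw : Q →ₗ[F] Q →ₗ[F] Q)
    (q1 : ∀ x y z : Q, nw (nw x y) z = nw x (se y z + ne y z + nw y z + sw y z))
    (q2 : ∀ x y z : Q, nw (ne x y) z = ne x (nw y z + sw y z))
    (q3 : ∀ x y z : Q, ne (ne x y + nw x y) z = ne x (ne y z + se y z))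
    (q4 : ∀ x y z : Q, nw (sw x y) z = sw x (ne y z + nw y z))
    (q5 : ∀ x y z : Q, nw (se x y) z = se x (nw y z))
    (q6 : ∀ x y z : Q, ne (se x y + sw x y) z = se x (ne y z))
    (q7 : ∀ x y z : Q, sw (nw x y + sw x y) z = sw x (se y z + sw y z))
    (q8 : ∀ x y z : Q, sw (ne x y + se x y) z = se x (sw y z))
    (q9 : ∀ x y z : Q, se (se x y + ne x y + nw x y + sw x y) z = se x (se y z))
    (X : Set Q) :
    sInf {p : Submodule F Q |
        X ⊆ p ∧ ∀ a ∈ p, ∀ b ∈ p,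
          se a b ∈ p ∧ ne a b ∈ p ∧ nw a b ∈ p ∧ sw a b ∈ p} =
      Submodule.span F
        {a : Q | ∃ t : QTree Q, t.leavesIn X ∧ t.normal ∧
          t.eval (fun u v => se u v) (fun u v => ne u v)
            (fun u v => nw u v) (fun u v => sw u v) = a} :=
  quadri_subalgebra_spanned_by_normal_monomials_general F Q se ne nw sw q1 q2 q3 q4 q5 q6 q7 q8 q9 X
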